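/- With the modified trust matrix product * (N_ij = Σ_{k≠j} C_ik · M_kj for i≠j, N_ii = ⟨1,0,0⟩), if there is no directed path from i to j in the DAG G (i ≠ j), then (C^d)_ij = ⟨0,0,1⟩ for every d ≥ 1. -/

import Mathlib

/-- The set of trust triples. -/
def Tset : Set (ℝ × ℝ × ℝ) :=
  {x | 0 ≤ x.1 ∧ 0 ≤ x.2.1 ∧ 0 ≤ x.2.2 ∧ x.1 + x.2.1 + x.2.2 = 1}

/-- Sequential aggregation "." on trust triples. -/
def seqMul (x y : ℝ × ℝ × ℝ) : ℝ × ℝ × ℝ :=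
  (x.1 * y.1 + x.2.1 * y.2.1,
   x.1 * y.2.1 + x.2.1 * y.1,
   1 - x.1 * y.1 - x.1 * y.2.1 - x.2.1 * y.2.1 - x.2.1 * y.1)

/-- Parallel aggregation "+" on trust triples (identity `⟨0,1,0⟩`). -/
def parAdd (x y : ℝ × ℝ × ℝ) : ℝ × ℝ × ℝ :=
  (x.1 + y.1 - x.1 * y.1,
   x.2.1 * y.2.1,
   (1 - x.1) * (1 - y.1) - x.2.1 * y.2.1)

/-- Parallel aggregation of a list of trust triples. -/
def parSum (l : List (ℝ × ℝ × ℝ)) : ℝ × ℝ × ℝ := l.foldr parAdd (0, 1, 0)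

/-- The modified trust matrix product: `(A*B)_ij = Σ_{k ≠ j} A_ik · B_kj` for
`i ≠ j`, and `(A*B)_ii = ⟨1,0,0⟩`. -/
noncomputable def tMatMul {n : ℕ} (A B : Fin n → Fin n → ℝ × ℝ × ℝ) :
    Fin n → Fin n → ℝ × ℝ × ℝ := fun i j =>
  if i = j then (1, 0, 0)
  else parSum (((Finset.univ.erase j).toList).map fun k => seqMul (A i k) (B k j))

/-- Powers of a trust matrix under the modified product. -/
noncomputable def tpow {n : ℕ} (C : Fin n → Fin n → ℝ × ℝ × ℝ) :
    ℕ → Fin n → Fin n → ℝ × ℝ × ℝ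
  | 0 => fun i j => if i = j then (1, 0, 0) else (0, 0, 1)
  | d + 1 => tMatMul (tpow C d) C

/-!
The triple `⟨0,0,1⟩` is absorbing for `seqMul` on both sides and idempotent for `parAdd`, so an
off-diagonal entry of a product is `⟨0,0,1⟩` as soon as every term `(C^d)_ik · C_kj` with `k ≠ j`
is. Induct on `d`: if `k` is reachable from `i` (possibly `k = i`), there is no edge `k → j`, so
`C_kj = ⟨0,0,1⟩`; otherwise `(C^d)_ik = ⟨0,0,1⟩` by induction.
-/

theorem seqMul_uncertain_left (y : ℝ × ℝ × ℝ) : seqMul (0, 0, 1) y = (0, 0, 1) := by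
  simp [seqMul]

theorem seqMul_uncertain_right (x : ℝ × ℝ × ℝ) : seqMul x (0, 0, 1) = (0, 0, 1) := by
  simp [seqMul]

theorem parAdd_uncertain_unit : parAdd (0, 0, 1) (0, 1, 0) = (0, 0, 1) := by
  norm_num [parAdd]

theorem parAdd_uncertain_self : parAdd (0, 0, 1) (0, 0, 1) = (0, 0, 1) := by
  norm_num [parAdd]

theorem parSum_eq_uncertain {l : List (ℝ × ℝ × ℝ)} (hl : l ≠ [])
    (h : ∀ x ∈ l, x = (0, 0, 1)) : parSum l = (0, 0, 1) := by
  induction l with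
  | nil => exact absurd rfl hl
  | cons a t ih =>
    simp only [List.mem_cons, forall_eq_or_imp] at h
    obtain ⟨rfl, ht⟩ := h
    show parAdd (0, 0, 1) (parSum t) = (0, 0, 1)
    by_cases hne : t = []
    · subst hne
      exact parAdd_uncertain_unit
    · rw [ih hne ht, parAdd_uncertain_self]

theorem tMatMul_eq_uncertain {n : ℕ} {A B : Fin n → Fin n → ℝ × ℝ × ℝ} {i j : Fin n}
    (hij : i ≠ j) (h : ∀ k, k ≠ j → seqMul (A i k) (B k j) = (0, 0, 1)) :
    tMatMul A B i j = (0, 0, 1) := by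
  rw [tMatMul, if_neg hij]
  apply parSum_eq_uncertain
  · simpa [List.map_eq_nil_iff, Finset.eq_empty_iff_forall_notMem] using ⟨i, hij⟩
  · simp only [List.mem_map, Finset.mem_toList, Finset.mem_erase]
    rintro _ ⟨k, ⟨hkj, -⟩, rfl⟩
    exact h k hkj

theorem tpow_eq_uncertain_of_not_transGen {n : ℕ} {r : Fin n → Fin n → Prop}
    {C : Fin n → Fin n → ℝ × ℝ × ℝ} (hnoedge : ∀ i j, i ≠ j → ¬ r i j → C i j = (0, 0, 1))
    (d : ℕ) {i j : Fin n} (hij : i ≠ j) (hnopath : ¬ Relation.TransGen r i j) :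
    tpow C d i j = (0, 0, 1) := by
  induction d generalizing j with
  | zero => simp [tpow, hij]
  | succ d ih =>
    refine tMatMul_eq_uncertain hij fun k hkj => ?_
    by_cases hik : Relation.ReflTransGen r i k
    · rw [hnoedge k j hkj fun hkj' => hnopath (.tail' hik hkj'), seqMul_uncertain_right]
    · have hik' : i ≠ k := fun h => hik (h ▸ .refl)
      rw [ih hik' fun h => hik h.to_reflTransGen, seqMul_uncertain_left]

theorem tpow_no_path_general {n : ℕ}
    (r : Fin n → Fin n → Prop)
    (C : Fin n → Fin n → ℝ × ℝ × ℝ)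
    (hnoedge : ∀ i j, i ≠ j → ¬ r i j → C i j = (0, 0, 1))
    (i j : Fin n) (hij : i ≠ j) (hnopath : ¬ Relation.TransGen r i j) :
    ∀ d, 1 ≤ d → tpow C d i j = (0, 0, 1) :=
  fun d _ => tpow_eq_uncertain_of_not_transGen hnoedge d hij hnopath

/-- if there is no directed path from `i` to `j` in the DAG
(`i ≠ j`), then `(C^d)_ij = ⟨0,0,1⟩` for every `d ≥ 1`. -/
theorem tpow_no_path {n : ℕ}
    (r : Fin n → Fin n → Prop) (hacyclic : ∀ v, ¬ Relation.TransGen r v v)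
    (C : Fin n → Fin n → ℝ × ℝ × ℝ)
    (hT : ∀ i j, C i j ∈ Tset)
    (hdiag : ∀ i, C i i = (1, 0, 0))
    (hnoedge : ∀ i j, i ≠ j → ¬ r i j → C i j = (0, 0, 1))
    (i j : Fin n) (hij : i ≠ j) (hnopath : ¬ Relation.TransGen r i j) :
    ∀ d, 1 ≤ d → tpow C d i j = (0, 0, 1) :=
  tpow_no_path_general r C hnoedge i j hij hnopath
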